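/- Assume the Blokhuis–Mazzocca bound: every Kakeya set K ⊆ 𝔽_q² (q an odd prime power) satisfies #K ≥ q(q+1)/2 + (q−1)/2. Then for every permutation α : 𝔽_q → 𝔽_q, the number Ψ(α) of collinear triples in the graph G_α = {(i,α(i)) : i ∈ 𝔽_q} satisfies Ψ(α) ≥ (q−1)/2. -/

import Mathlib

/-!
Dualise the graph of `α`: the point `(i, α i)` corresponds to the line `y = α i + i x` of slope `i`
through `(0, α i)`, and these `q` lines form a Kakeya set `K_α` (the vertical line `x = 0` is
covered because `α` is onto). On the vertical slice at `x`, a fibre of size `m` of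
`i ↦ α i + i x` contributes one point of `K_α`, `C(m,2)` pairs and `C(m,3)` triples, and
`C(m,2) + 1 ≤ m + C(m,3)`. Summing over slices, every pair `{i, j}` lies in a fibre on exactly one
slice, and a triple in a fibre at `x` is a collinear triple of the graph on a line of slope `-x`,
counted once; hence `C(q,2) + #K_α ≤ q² + Ψ(α)`. The Blokhuis–Mazzocca bound for `#K_α` and
`C(q,2) + q(q+1)/2 = q²` give `Ψ(α) ≥ (q-1)/2`.
-/

open Finset

/-- The line in `F × F` through `p` with (finite) slope `s`. -/
def lineF {F : Type*} [Field F] [Fintype F] [DecidableEq F] (s : F) (p : F × F) :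
    Finset (F × F) :=
  Finset.univ.filter fun x => x.2 = p.2 + s * (x.1 - p.1)

/-- The vertical line in `F × F` with first coordinate `c`. -/
def vertF {F : Type*} [Field F] [Fintype F] [DecidableEq F] (c : F) : Finset (F × F) :=
  Finset.univ.filter fun x => x.1 = c

/-- The line through `p` with slope `s ∈ PG(1,q) = F ∪ {∞}` (`none` = vertical). -/
def lineO {F : Type*} [Field F] [Fintype F] [DecidableEq F] (s : Option F) (p : F × F) :
    Finset (F × F) :=
  match s with
  | some a => lineF a p
  | none => vertF p.1

theorem Nat.choose_two_add_one_le_add_choose_three {m : ℕ} (hm : 1 ≤ m) :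
    m.choose 2 + 1 ≤ m + m.choose 3 := by
  rcases lt_or_ge m 5 with h | h
  · interval_cases m <;> decide
  · have h3 : m.choose 3 * 3 = m.choose 2 * (m - 2) := by
      simpa using Nat.choose_succ_right_eq m 2
    have h4 : m.choose 2 * 3 ≤ m.choose 2 * (m - 2) := Nat.mul_le_mul_left _ (by omega)
    omega

theorem Nat.choose_two_add_mul_succ_div_two (n : ℕ) : n.choose 2 + n * (n + 1) / 2 = n * n := by
  have hsum : n * (n - 1) + n * (n + 1) = 2 * (n * n) := by
    rcases n with _ | n
    · rfl
    · simp only [Nat.add_sub_cancel]; ring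
  rw [Nat.choose_two_right, ← Nat.add_div_of_dvd_right (Nat.even_mul_pred_self n).two_dvd, hsum,
    Nat.mul_div_cancel_left _ two_pos]

section ConstSubsets

variable {ι β : Type*} [Fintype ι] [DecidableEq ι] [DecidableEq β]

def constSubsets (g : ι → β) (k : ℕ) : Finset (Finset ι) :=
  (univ.powersetCard k).filter fun t => ∀ i ∈ t, ∀ j ∈ t, g i = g j

theorem constSubsets_eq_biUnion (g : ι → β) {k : ℕ} (hk : 0 < k) :
    constSubsets g k = (univ.image g).biUnion fun v => (univ.filter (g · = v)).powersetCard k := by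
  ext t
  simp only [constSubsets, mem_filter, mem_powersetCard, mem_biUnion, mem_image, mem_univ,
    true_and, subset_univ]
  constructor
  · rintro ⟨hcard, hconst⟩
    obtain ⟨i₀, hi₀⟩ := card_pos.mp (hcard ▸ hk)
    refine ⟨g i₀, ⟨i₀, rfl⟩, fun i hi => ?_, hcard⟩
    simpa using hconst i hi i₀ hi₀
  · rintro ⟨v, -, hfib, hcard⟩
    refine ⟨hcard, fun i hi j hj => ?_⟩
    have hi' := hfib hi
    have hj' := hfib hj
    simp only [mem_filter, mem_univ, true_and] at hi' hj'
    rw [hi', hj']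

theorem card_constSubsets (g : ι → β) {k : ℕ} (hk : 0 < k) :
    #(constSubsets g k) = ∑ v ∈ univ.image g, (#{i | g i = v}).choose k := by
  rw [constSubsets_eq_biUnion g hk, card_biUnion]
  · simp only [card_powersetCard]
  · intro v _ w _ hvw
    refine disjoint_left.mpr fun t htv htw => ?_
    rw [mem_powersetCard] at htv htw
    obtain ⟨i, hi⟩ := card_pos.mp (htv.2 ▸ hk)
    have hv := htv.1 hi
    have hw := htw.1 hi
    simp only [mem_filter, mem_univ, true_and] at hv hw
    exact hvw (hv ▸ hw)

theorem card_constSubsets_two_add_card_image_le (g : ι → β) :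
    #(constSubsets g 2) + #(univ.image g) ≤ Fintype.card ι + #(constSubsets g 3) := by
  rw [card_constSubsets g two_pos, card_constSubsets g three_pos, ← card_univ,
    card_eq_sum_card_image g univ, card_eq_sum_ones (univ.image g), ← sum_add_distrib,
    ← sum_add_distrib]
  refine sum_le_sum fun v hv => Nat.choose_two_add_one_le_add_choose_three ?_
  obtain ⟨i, -, rfl⟩ := mem_image.mp hv
  exact card_pos.mpr ⟨i, by simp⟩

end ConstSubsets

section Kakeya

variable {F : Type*} [Field F]

/-- The `y`-intercept of the line of slope `-x` through the point `(i, α i)` of the graph of `α`;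
as a function of `x` it is the line of slope `i` through `(0, α i)`. -/
def intercept (α : F → F) (x i : F) : F :=
  α i + i * x

theorem eq_of_intercept_eq {α : F → F} {x x' i j : F} (hij : i ≠ j)
    (h : intercept α x i = intercept α x j) (h' : intercept α x' i = intercept α x' j) :
    x = x' := by
  unfold intercept at h h'
  have : (i - j) * (x - x') = 0 := by linear_combination h - h'
  exact sub_eq_zero.mp ((mul_eq_zero.mp this).resolve_left (sub_ne_zero.mpr hij))

theorem intercept_eq_intercept (α : F → F) {i j : F} (hij : i ≠ j) :
    intercept α ((α j - α i) / (i - j)) i = intercept α ((α j - α i) / (i - j)) j := by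
  have : i - j ≠ 0 := sub_ne_zero.mpr hij
  unfold intercept
  field_simp
  ring

variable [Fintype F] [DecidableEq F]

def IsKakeya (K : Finset (F × F)) : Prop :=
  ∀ s : Option F, ∃ p : F × F, lineO s p ⊆ K

def kakeyaSet (α : F → F) : Finset (F × F) :=
  univ.biUnion fun i => lineF i (0, α i)

theorem mem_kakeyaSet {α : F → F} {p : F × F} :
    p ∈ kakeyaSet α ↔ ∃ i, p.2 = intercept α p.1 i := by
  simp [kakeyaSet, lineF, intercept]

theorem isKakeya_kakeyaSet {α : F → F} (hα : Function.Surjective α) : IsKakeya (kakeyaSet α) := by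
  rintro (_ | s)
  · refine ⟨(0, 0), fun p hp => mem_kakeyaSet.mpr ?_⟩
    simp only [lineO, vertF, mem_filter, mem_univ, true_and] at hp
    obtain ⟨i, hi⟩ := hα p.2
    exact ⟨i, by simp [intercept, hp, hi]⟩
  · exact ⟨(0, α s), subset_biUnion_of_mem (fun i => lineF i (0, α i)) (mem_univ s)⟩

theorem card_kakeyaSet (α : F → F) : #(kakeyaSet α) = ∑ x, #(univ.image (intercept α x)) := by
  have hK : kakeyaSet α = univ.biUnion fun x => (univ.image (intercept α x)).map
      (Function.Embedding.sectR x F) := by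
    ext p
    simp only [mem_kakeyaSet, mem_biUnion, mem_map, mem_image, mem_univ, true_and,
      Function.Embedding.sectR_apply]
    constructor
    · rintro ⟨i, hi⟩
      exact ⟨p.1, _, ⟨i, hi.symm⟩, rfl⟩
    · rintro ⟨x, _, ⟨i, rfl⟩, rfl⟩
      exact ⟨i, rfl⟩
  rw [hK, card_biUnion]
  · simp only [card_map]
  · intro x _ x' _ hxx'
    simp only [disjoint_left, mem_map, Function.Embedding.sectR_apply]
    rintro _ ⟨y, -, rfl⟩ ⟨y', -, h⟩
    exact hxx' (Prod.ext_iff.mp h).1.symm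

theorem eq_of_mem_constSubsets {α : F → F} {x x' : F} {k : ℕ} {t : Finset F} (hk : 2 ≤ k)
    (hx : t ∈ constSubsets (intercept α x) k) (hx' : t ∈ constSubsets (intercept α x') k) :
    x = x' := by
  simp only [constSubsets, mem_filter, mem_powersetCard] at hx hx'
  obtain ⟨i, hi, j, hj, hij⟩ := one_lt_card.mp (by omega : 1 < #t)
  exact eq_of_intercept_eq hij (hx.2 i hi j hj) (hx'.2 i hi j hj)

theorem sum_card_constSubsets_intercept (α : F → F) {k : ℕ} (hk : 2 ≤ k) :
    ∑ x, #(constSubsets (intercept α x) k)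
      = #(univ.biUnion fun x => constSubsets (intercept α x) k) :=
  (card_biUnion fun _ _ _ _ hxx' =>
    disjoint_left.mpr fun _ hx hx' => hxx' (eq_of_mem_constSubsets hk hx hx')).symm

theorem biUnion_constSubsets_intercept_two (α : F → F) :
    univ.biUnion (fun x => constSubsets (intercept α x) 2) = univ.powersetCard 2 := by
  refine Subset.antisymm (biUnion_subset.mpr fun x _ => filter_subset _ _) fun t ht => ?_
  obtain ⟨i, j, hij, rfl⟩ := card_eq_two.mp (mem_powersetCard.mp ht).2
  refine mem_biUnion.mpr ⟨(α j - α i) / (i - j), mem_univ _, mem_filter.mpr ⟨ht, ?_⟩⟩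
  have h := intercept_eq_intercept α hij
  simp only [mem_insert, mem_singleton]
  rintro a (rfl | rfl) b (rfl | rfl) <;> simp [h]

theorem sum_card_constSubsets_intercept_two (α : F → F) :
    ∑ x, #(constSubsets (intercept α x) 2) = (Fintype.card F).choose 2 := by
  rw [sum_card_constSubsets_intercept α le_rfl, biUnion_constSubsets_intercept_two,
    card_powersetCard, card_univ]

end Kakeya

section Collinear

variable {F : Type*} [Field F]

theorem collinear_of_forall_snd_add_fst_mul_eq {s : Set (F × F)} (x c : F)
    (h : ∀ p ∈ s, p.2 + p.1 * x = c) : Collinear F s := by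
  refine collinear_iff_exists_forall_eq_smul_vadd s |>.mpr ⟨(0, c), (1, -x), fun p hp => ⟨p.1, ?_⟩⟩
  ext
  · simp
  · simp [← h p hp]

variable [Fintype F] [DecidableEq F]

def graphFinset (α : F → F) : Finset (F × F) :=
  univ.image fun i => (i, α i)

open Classical in
noncomputable def collinearTriples (S : Finset (F × F)) : Finset (Finset (F × F)) :=
  univ.filter fun t => t ⊆ S ∧ t.card = 3 ∧ Collinear F (t : Set (F × F))

open Classical in
theorem image_graph_mem_collinearTriples {α : F → F} {x : F} {t : Finset F}
    (ht : t ∈ constSubsets (intercept α x) 3) :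
    t.image (fun i => (i, α i)) ∈ collinearTriples (graphFinset α) := by
  simp only [constSubsets, mem_filter, mem_powersetCard] at ht
  obtain ⟨i₀, hi₀⟩ := card_pos.mp (by omega : 0 < #t)
  rw [collinearTriples, mem_filter]
  refine ⟨mem_univ _, image_subset_image (subset_univ t), ?_, ?_⟩
  · rw [card_image_of_injective _ fun i j h => (Prod.ext_iff.mp h).1, ht.1.2]
  · refine collinear_of_forall_snd_add_fst_mul_eq x (intercept α x i₀) fun p hp => ?_
    obtain ⟨i, hi, rfl⟩ := by simpa using hp
    exact ht.2 i hi i₀ hi₀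

theorem sum_card_constSubsets_intercept_three_le (α : F → F) :
    ∑ x, #(constSubsets (intercept α x) 3) ≤ #(collinearTriples (graphFinset α)) := by
  rw [sum_card_constSubsets_intercept α (by norm_num)]
  refine card_le_card_of_injOn (fun t => t.image fun i => (i, α i)) (fun t ht => ?_) ?_
  · obtain ⟨x, -, hx⟩ := mem_biUnion.mp ht
    exact image_graph_mem_collinearTriples hx
  · intro t _ t' _ h
    simpa [image_image, Function.comp_def] using congrArg (image Prod.fst) h

end Collinear

open Classical in
theorem cooper_solymosi_general {F : Type*} [Field F] [Fintype F] [DecidableEq F]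
    (hBM : ∀ K : Finset (F × F), (∀ s : Option F, ∃ p : F × F, lineO s p ⊆ K) →
      Fintype.card F * (Fintype.card F + 1) / 2 + (Fintype.card F - 1) / 2 ≤ K.card)
    (α : F ≃ F) :
    (Fintype.card F - 1) / 2
      ≤ ((Finset.univ : Finset (Finset (F × F))).filter fun t =>
          t ⊆ Finset.univ.image (fun i => (i, α i)) ∧ t.card = 3 ∧
          Collinear F (t : Set (F × F))).card := by
  have hK := hBM _ (isKakeya_kakeyaSet α.surjective)
  have hslices : ∑ x, (#(constSubsets (intercept α x) 2) + #(univ.image (intercept α x)))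
      ≤ ∑ x : F, (Fintype.card F + #(constSubsets (intercept α x) 3)) :=
    sum_le_sum fun x _ => card_constSubsets_two_add_card_image_le _
  rw [sum_add_distrib, sum_add_distrib, ← card_kakeyaSet, sum_card_constSubsets_intercept_two,
    sum_const, card_univ, smul_eq_mul] at hslices
  have hΨ := sum_card_constSubsets_intercept_three_le (α : F → F)
  have hq := Nat.choose_two_add_mul_succ_div_two (Fintype.card F)
  change _ ≤ #(collinearTriples (graphFinset α))
  omega

open Classical in
theorem cooper_solymosi {F : Type*} [Field F] [Fintype F] [DecidableEq F]
    (hodd : Odd (Fintype.card F))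
    (hBM : ∀ K : Finset (F × F), (∀ s : Option F, ∃ p : F × F, lineO s p ⊆ K) →
      Fintype.card F * (Fintype.card F + 1) / 2 + (Fintype.card F - 1) / 2 ≤ K.card)
    (α : F ≃ F) :
    (Fintype.card F - 1) / 2
      ≤ ((Finset.univ : Finset (Finset (F × F))).filter fun t =>
          t ⊆ Finset.univ.image (fun i => (i, α i)) ∧ t.card = 3 ∧
          Collinear F (t : Set (F × F))).card :=
  cooper_solymosi_general hBM α
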